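/- Every interval [σ,τ] in the consecutive pattern poset is strongly Sperner: letting N = |τ|−|σ| and a_r = #{π : σ ≤ π ≤ τ, |π| = |σ|+r} for 0 ≤ r ≤ N, for every integer k with 1 ≤ k ≤ N+1, the maximum cardinality of a subset of [σ,τ] expressible as a union of k antichains of [σ,τ] equals the sum of the k largest values among a_0, a_1, …, a_N. -/

import Mathlib

open scoped Classical

noncomputable section

/-- A permutation of length `n`, written in one-line notation as `τ 0, τ 1, …, τ (n-1)`. -/
abbrev Perm' (n : ℕ) := Equiv.Perm (Fin n)

/-- `σ` occurs in `τ` as a consecutive pattern at (0-indexed) starting position `i`: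
the window `τ i, …, τ (i+m-1)` of adjacent entries is in the same relative order as `σ`. -/
def OccursAt {m n : ℕ} (σ : Perm' m) (τ : Perm' n) (i : ℕ) : Prop :=
  ∃ h : i + m ≤ n, ∀ a b : Fin m,
    σ a < σ b ↔
      τ ⟨i + a, by have := a.isLt; omega⟩ < τ ⟨i + b, by have := b.isLt; omega⟩

/-- Consecutive pattern containment `σ ≤ τ`. -/
def PattLE {m n : ℕ} (σ : Perm' m) (τ : Perm' n) : Prop :=
  ∃ i, OccursAt σ τ i

/-- Permutations of arbitrary length: the carrier of the consecutive pattern poset. -/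
abbrev PermS : Type := Σ n : ℕ, Perm' n

/-- The order of the consecutive pattern poset. -/
def pLE (p q : PermS) : Prop := PattLE p.2 q.2

/-- The strict order of the consecutive pattern poset. -/
def pLT (p q : PermS) : Prop := pLE p q ∧ p ≠ q

/-- The covering relation of the consecutive pattern poset. -/
def pCovBy (p q : PermS) : Prop :=
  pLT p q ∧ ∀ r : PermS, pLT p r → pLT r q → False

/-- The open interval `(p,q)` in the consecutive pattern poset. -/
def openInterval (p q : PermS) : Set PermS := {r | pLT p r ∧ pLT r q}

/-- The Hasse diagram of the open interval `(p,q)`: vertices are the permutations strictly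
between `p` and `q`, edges are the covering relations of the consecutive pattern poset. -/
def hasse (p q : PermS) : SimpleGraph (openInterval p q) :=
  SimpleGraph.fromRel fun a b => pCovBy a.1 b.1

/-- The interval `[p,q]` is disconnected if the Hasse diagram of `(p,q)` is not connected. -/
def IntervalDisconnected (p q : PermS) : Prop := ¬ (hasse p q).Connected

/-- `window τ i m` is the reduction of the window of `τ` of length `m` starting at
(0-indexed) position `i`, i.e. the pattern `τ[i+1, i+m]` in 1-indexed notation. -/
def window {n : ℕ} (τ : Perm' n) (i m : ℕ) : Perm' m :=
  if h : i + m ≤ n then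
    (Tuple.sort fun a : Fin m => τ ⟨i + a, by have := a.isLt; omega⟩)⁻¹
  else 1

/-- `τ` is monotone, i.e. equal to `12…n` or `n…21`. -/
def IsMonotone {n : ℕ} (τ : Perm' n) : Prop :=
  (∀ a b : Fin n, a ≤ b → τ a ≤ τ b) ∨ (∀ a b : Fin n, a ≤ b → τ b ≤ τ a)

/-- `τ` has a bifix (a common proper prefix and proper suffix) of length `k`. -/
def HasBifixLen {n : ℕ} (τ : Perm' n) (k : ℕ) : Prop :=
  0 < k ∧ k < n ∧ window τ 0 k = window τ (n - k) k

/-- The length `|x(τ)|` of the exterior of `τ`, the longest bifix of `τ`. -/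
def extLen {n : ℕ} (τ : Perm' n) : ℕ := Nat.findGreatest (HasBifixLen τ) n

/-- The exterior `x(τ)` of `τ`: its longest bifix. -/
def extPerm {n : ℕ} (τ : Perm' n) : Perm' (extLen τ) := window τ 0 (extLen τ)

/-- The interior `i(τ) = τ[2,n-1]` of `τ`. -/
def intPerm {n : ℕ} (τ : Perm' n) : Perm' (n - 2) := window τ 1 (n - 2)

/-- `p` straddles `q`: `p < q`, `p` is both a prefix and a suffix of `q`,
and `p` has no other occurrence in `q`. -/
def Straddles (p q : PermS) : Prop :=
  pLT p q ∧ OccursAt p.2 q.2 0 ∧ OccursAt p.2 q.2 (q.1 - p.1) ∧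
    ∀ i, OccursAt p.2 q.2 i → i = 0 ∨ i = q.1 - p.1

/-- The interval `[p,q]` contains a non-trivial disconnected subinterval, i.e. a
subinterval `[a,b]` of rank at least 3 which is disconnected. -/
def HasNontrivDisconSub (p q : PermS) : Prop :=
  ∃ a b : PermS, pLE p a ∧ pLE a b ∧ pLE b q ∧ a.1 + 3 ≤ b.1 ∧ IntervalDisconnected a b

/-- The finite set of all permutations of length at most `N`. -/
def permsUpTo (N : ℕ) : Finset PermS :=
  (Finset.range (N + 1)).sigma fun n => (Finset.univ : Finset (Perm' n))

/-- The closed interval `[p,q]` of the consecutive pattern poset, as a finite set. -/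
def intervalF (p q : PermS) : Finset PermS :=
  (permsUpTo q.1).filter fun r => pLE p r ∧ pLE r q

/-- The number of elements of the interval `[σ,τ]` of rank `r`, i.e. of length `|σ| + r`. -/
def rankCard {m n : ℕ} (σ : Perm' m) (τ : Perm' n) (r : ℕ) : ℕ :=
  ((permsUpTo n).filter fun p => pLE ⟨m, σ⟩ p ∧ pLE p ⟨n, τ⟩ ∧ p.1 = m + r).card

/-- The direct sum `σ ⊕ π` of two permutations. -/
def dsum {m k : ℕ} (σ : Perm' m) (π : Perm' k) : Perm' (m + k) :=
  finSumFinEquiv.permCongr (σ.sumCongr π)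


/-!
A union of `k` antichains contains no chain with more than `k` elements. Peeling off the
maximal elements of such a set leaves a set with no chain of more than `k - 1` elements whose
elements are all strictly shorter than the longest peeled one, so by induction the set is
bounded by a sum of `k` distinct rank sizes, provided every antichain is bounded by the size of
the rank of its longest element `u₀`. For that, each element `u` of an antichain is sent to the
window of `τ` of length `|u₀|` around its leftmost occurrence, flush left if that occurrence ends
no later than the one of `u₀`, flush right otherwise. The leftmost occurrence of the window
starts where the window does, and leftmost occurrences of distinct elements of an antichain
share neither their start nor their end, which makes the map injective.
-/

section Peeling

variable {α : Type*} {r : α → α → Prop}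

def maximalElems (r : α → α → Prop) (U : Finset α) : Finset α :=
  U.filter fun u => ∀ v ∈ U, r u v → v = u

lemma maximalElems_subset (U : Finset α) : maximalElems r U ⊆ U :=
  Finset.filter_subset _ _

lemma isAntichain_maximalElems (U : Finset α) : IsAntichain r (maximalElems r U : Set α) :=
  fun _ hu _ hv huv h => huv ((Finset.mem_filter.1 hu).2 _ (Finset.mem_filter.1 hv).1 h).symm

variable [IsPreorder α r] (ℓ : α → ℕ)

lemma exists_mem_maximalElems_of_mem {U : Finset α}
    (hℓ : ∀ a ∈ U, ∀ b ∈ U, r a b → a ≠ b → ℓ a < ℓ b) {u : α} (hu : u ∈ U) :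
    ∃ w ∈ maximalElems r U, r u w := by
  obtain ⟨w, hw, hwmax⟩ :=
    (U.filter (r u)).exists_max_image ℓ ⟨u, Finset.mem_filter.2 ⟨hu, refl_of r u⟩⟩
  rw [Finset.mem_filter] at hw
  refine ⟨w, Finset.mem_filter.2 ⟨hw.1, fun v hv hwv => ?_⟩, hw.2⟩
  by_contra hne
  exact (hℓ w hw.1 v hv hwv (Ne.symm hne)).not_ge
    (hwmax v (Finset.mem_filter.2 ⟨hv, trans_of r hw.2 hwv⟩))

lemma exists_lt_of_mem_sdiff_maximalElems {U : Finset α}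
    (hℓ : ∀ a ∈ U, ∀ b ∈ U, r a b → a ≠ b → ℓ a < ℓ b) {u : α}
    (hu : u ∈ U \ maximalElems r U) : ∃ w ∈ maximalElems r U, ℓ u < ℓ w := by
  rw [Finset.mem_sdiff] at hu
  obtain ⟨w, hw, huw⟩ := exists_mem_maximalElems_of_mem ℓ hℓ hu.1
  exact ⟨w, hw, hℓ u hu.1 w (maximalElems_subset U hw) huw (by rintro rfl; exact hu.2 hw)⟩

/-- A chain below the maximal elements extends by one of them. -/
lemma card_le_of_isChain_sdiff_maximalElems {U : Finset α}
    (hℓ : ∀ a ∈ U, ∀ b ∈ U, r a b → a ≠ b → ℓ a < ℓ b) {k : ℕ}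
    (hU : ∀ C ⊆ U, IsChain r (C : Set α) → C.card ≤ k + 1)
    {C : Finset α} (hCU : C ⊆ U \ maximalElems r U) (hC : IsChain r (C : Set α)) :
    C.card ≤ k := by
  rcases C.eq_empty_or_nonempty with rfl | hne
  · simp
  have hCU' : C ⊆ U := hCU.trans Finset.sdiff_subset
  obtain ⟨t, ht, htmax⟩ := C.exists_max_image ℓ hne
  have hle_t : ∀ c ∈ C, c ≠ t → r c t := by
    intro c hc hct
    refine (hC hc ht hct).resolve_right fun htc => ?_
    exact (hℓ t (hCU' ht) c (hCU' hc) htc (Ne.symm hct)).not_ge (htmax c hc)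
  obtain ⟨w, hw, htw⟩ := exists_mem_maximalElems_of_mem ℓ hℓ (hCU' ht)
  have hwC : w ∉ C := fun h => (Finset.mem_sdiff.1 (hCU h)).2 hw
  have hchain : IsChain r (insert w C : Finset α) := by
    rw [Finset.coe_insert]
    refine hC.insert fun c hc _ => Or.inr ?_
    rcases eq_or_ne c t with rfl | hct
    · exact htw
    · exact trans_of r (hle_t c hc hct) htw
  have := hU _ (Finset.insert_subset (maximalElems_subset U hw) hCU') hchain
  rw [Finset.card_insert_of_notMem hwC] at this
  omega

theorem exists_card_le_sum_of_isChain_card_le (g : ℕ → ℕ) (k : ℕ) (U : Finset α) (L : ℕ)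
    (hL : ∀ u ∈ U, ℓ u < L) (hℓ : ∀ a ∈ U, ∀ b ∈ U, r a b → a ≠ b → ℓ a < ℓ b)
    (hanti : ∀ M ⊆ U, IsAntichain r (M : Set α) → ∀ u₀ ∈ M, (∀ u ∈ M, ℓ u ≤ ℓ u₀) →
      M.card ≤ g (ℓ u₀))
    (hchain : ∀ C ⊆ U, IsChain r (C : Set α) → C.card ≤ k) :
    ∃ T ⊆ Finset.range L, T.card ≤ k ∧ U.card ≤ ∑ i ∈ T, g i := by
  induction k generalizing U L with
  | zero =>
    refine ⟨∅, Finset.empty_subset _, le_rfl, ?_⟩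
    rcases U.eq_empty_or_nonempty with rfl | ⟨u, hu⟩
    · simp
    · simpa using hchain {u} (by simpa using hu) (by simp)
  | succ k ih =>
    rcases U.eq_empty_or_nonempty with rfl | ⟨w, hw⟩
    · exact ⟨∅, Finset.empty_subset _, by simp, by simp⟩
    set M := maximalElems r U
    have hMU : M ⊆ U := maximalElems_subset U
    obtain ⟨v, hv, -⟩ := exists_mem_maximalElems_of_mem ℓ hℓ hw
    obtain ⟨u₀, hu₀, hmax⟩ := M.exists_max_image ℓ ⟨v, hv⟩
    have hlt : ∀ u ∈ U \ M, ℓ u < ℓ u₀ := fun u hu =>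
      let ⟨v, hv, huv⟩ := exists_lt_of_mem_sdiff_maximalElems ℓ hℓ hu
      huv.trans_le (hmax v hv)
    obtain ⟨T, hT, hTk, hcard⟩ := ih (U \ M) (ℓ u₀) hlt
      (fun a ha b hb => hℓ a (Finset.sdiff_subset ha) b (Finset.sdiff_subset hb))
      (fun M' hM' => hanti M' (hM'.trans Finset.sdiff_subset))
      (fun C => card_le_of_isChain_sdiff_maximalElems ℓ hℓ hchain)
    have hu₀T : ℓ u₀ ∉ T := fun h => by simpa using hT h
    refine ⟨insert (ℓ u₀) T, Finset.insert_subset ?_ (hT.trans ?_), ?_, ?_⟩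
    · exact Finset.mem_range.2 (hL u₀ (hMU hu₀))
    · exact Finset.range_subset_range.2 (hL u₀ (hMU hu₀)).le
    · rw [Finset.card_insert_of_notMem hu₀T]; omega
    · rw [Finset.sum_insert hu₀T, ← Finset.card_sdiff_add_card_eq_card hMU]
      have := hanti M hMU (isAntichain_maximalElems U) u₀ hu₀ hmax
      omega

end Peeling

lemma card_le_of_isChain_subset_biUnion {α ι : Type*} [Fintype ι] [DecidableEq α]
    {r : α → α → Prop} {A : ι → Finset α} (hA : ∀ i, IsAntichain r (A i : Set α))
    {C : Finset α} (hCA : C ⊆ Finset.univ.biUnion A) (hC : IsChain r (C : Set α)) :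
    C.card ≤ Fintype.card ι := by
  have hcover : C ⊆ Finset.univ.biUnion fun i => A i ∩ C := by
    intro c hc
    obtain ⟨i, -, hi⟩ := Finset.mem_biUnion.1 (hCA hc)
    exact Finset.mem_biUnion.2 ⟨i, Finset.mem_univ i, Finset.mem_inter.2 ⟨hi, hc⟩⟩
  have hsingle : ∀ i, (A i ∩ C).card ≤ 1 := by
    refine fun i => Finset.card_le_one.2 fun a ha b hb => ?_
    rw [Finset.mem_inter] at ha hb
    by_contra hne
    rcases hC ha.2 hb.2 hne with h | h
    · exact hA i ha.1 hb.1 hne h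
    · exact hA i hb.1 ha.1 (Ne.symm hne) h
  calc C.card ≤ (Finset.univ.biUnion fun i => A i ∩ C).card := Finset.card_le_card hcover
    _ ≤ ∑ i, (A i ∩ C).card := Finset.card_biUnion_le
    _ ≤ ∑ _i : ι, 1 := Finset.sum_le_sum fun i _ => hsingle i
    _ = Fintype.card ι := by simp

lemma Equiv.Perm.eq_of_lt_iff_lt {α : Type*} [LinearOrder α] [WellFoundedLT α]
    {p q : Equiv.Perm α} (h : ∀ a b, p a < p b ↔ q a < q b) :
    p = q := by
  have hmono : StrictMono (p * q⁻¹) := fun x y hxy => by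
    simpa [h] using hxy
  have := congrArg (⇑) (Subsingleton.elim
    (hmono.orderIsoOfSurjective _ (p * q⁻¹).surjective) (OrderIso.refl _))
  exact Equiv.ext fun x => by simpa using congrFun this (q x)

namespace OccursAt

variable {l m n : ℕ} {ρ : Perm' l} {σ : Perm' m} {τ : Perm' n}

lemma add_le {i : ℕ} (h : OccursAt σ τ i) : i + m ≤ n := h.1

lemma refl (σ : Perm' m) : OccursAt σ σ 0 := ⟨by omega, fun a b => by simp⟩

lemma trans {i j : ℕ} (hρ : OccursAt ρ σ j) (hσ : OccursAt σ τ i) : OccursAt ρ τ (i + j) :=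
  ⟨by have := hρ.1; have := hσ.1; omega, fun a b =>
    (hρ.2 a b).trans ((hσ.2 _ _).trans (by simp only [Nat.add_assoc]))⟩

lemma of_nested {i j : ℕ} (hσ : OccursAt σ τ i) (hρ : OccursAt ρ τ j) (hij : i ≤ j)
    (hend : j + l ≤ i + m) : OccursAt ρ σ (j - i) :=
  ⟨by omega, fun a b => (hρ.2 a b).trans ((hσ.2 _ _).trans (by
    have : i + (j - i) = j := by omega
    simp only [← Nat.add_assoc, this])).symm⟩

lemma eq {i : ℕ} {ρ' : Perm' l} (hρ : OccursAt ρ τ i) (hρ' : OccursAt ρ' τ i) : ρ = ρ' :=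
  Equiv.Perm.eq_of_lt_iff_lt fun a b => (hρ.2 a b).trans (hρ'.2 a b).symm

end OccursAt

lemma occursAt_window {n : ℕ} (τ : Perm' n) {i l : ℕ} (h : i + l ≤ n) :
    OccursAt (window τ i l) τ i := by
  set f : Fin l → Fin n := fun a => τ ⟨i + a, by have := a.isLt; omega⟩
  have hf : Function.Injective f := fun a b hab => by
    simpa [Fin.ext_iff] using τ.injective hab
  have hsort : StrictMono (f ∘ Tuple.sort f) :=
    (Tuple.monotone_sort f).strictMono_of_injective (hf.comp (Tuple.sort f).injective)
  refine ⟨h, fun a b => ?_⟩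
  rw [window, dif_pos h, ← hsort.lt_iff_lt]
  simp [f]

lemma pLE_refl (p : PermS) : pLE p p := ⟨0, OccursAt.refl p.2⟩

lemma pLE_trans {p q s : PermS} (hpq : pLE p q) (hqs : pLE q s) : pLE p s :=
  let ⟨_, hj⟩ := hpq
  let ⟨_, hi⟩ := hqs
  ⟨_, hj.trans hi⟩

instance : IsPreorder PermS pLE where
  refl := pLE_refl
  trans _ _ _ := pLE_trans

lemma pLE.length_le {p q : PermS} (h : pLE p q) : p.1 ≤ q.1 :=
  let ⟨i, hi⟩ := h
  (Nat.le_add_left p.1 i).trans hi.add_le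

lemma pLE.eq_of_length_eq {p q : PermS} (h : pLE p q) (hl : p.1 = q.1) : p = q := by
  obtain ⟨l, p⟩ := p
  obtain ⟨l', q⟩ := q
  obtain rfl : l = l' := hl
  obtain ⟨i, hi⟩ := h
  have hi : OccursAt p q i := hi
  obtain rfl : i = 0 := by have := hi.add_le; omega
  rw [hi.eq (OccursAt.refl q)]

lemma pLE.length_lt {p q : PermS} (h : pLE p q) (hne : p ≠ q) : p.1 < q.1 :=
  (h.length_le).lt_of_ne fun hl => hne (h.eq_of_length_eq hl)

section LeftmostOccurrence

variable {n : ℕ} (τ : Perm' n)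

def firstOcc (p : PermS) : ℕ := sInf {i | OccursAt p.2 τ i}

variable {τ}

lemma occursAt_firstOcc {p : PermS} (hp : pLE p ⟨n, τ⟩) : OccursAt p.2 τ (firstOcc τ p) :=
  Nat.sInf_mem hp

lemma firstOcc_le {p : PermS} {i : ℕ} (h : OccursAt p.2 τ i) : firstOcc τ p ≤ i :=
  Nat.sInf_le h

lemma pLE_of_firstOcc_nested {p q : PermS} (hp : pLE p ⟨n, τ⟩) (hq : pLE q ⟨n, τ⟩)
    (hstart : firstOcc τ q ≤ firstOcc τ p) (hend : firstOcc τ p + p.1 ≤ firstOcc τ q + q.1) :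
    pLE p q :=
  ⟨_, (occursAt_firstOcc hq).of_nested (occursAt_firstOcc hp) hstart hend⟩

lemma firstOcc_window {u : PermS} (hu : pLE u ⟨n, τ⟩) {s W : ℕ} (hW : s + W ≤ n)
    (hstart : s ≤ firstOcc τ u) (hend : firstOcc τ u + u.1 ≤ s + W) :
    pLE u ⟨W, window τ s W⟩ ∧ firstOcc τ ⟨W, window τ s W⟩ = s := by
  have hwin := occursAt_window τ hW
  have hsub := hwin.of_nested (occursAt_firstOcc hu) hstart hend
  refine ⟨⟨_, hsub⟩, (firstOcc_le hwin).antisymm ?_⟩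
  have := firstOcc_le (hsub.trans (occursAt_firstOcc (p := ⟨W, window τ s W⟩) ⟨s, hwin⟩))
  omega

variable {M : Finset PermS}

lemma eq_of_firstOcc_nested (hM : IsAntichain pLE (M : Set PermS))
    (hMτ : ∀ u ∈ M, pLE u ⟨n, τ⟩) {u v : PermS} (hu : u ∈ M) (hv : v ∈ M)
    (hstart : firstOcc τ v ≤ firstOcc τ u) (hend : firstOcc τ u + u.1 ≤ firstOcc τ v + v.1) :
    u = v := by
  by_contra hne
  exact hM hu hv hne (pLE_of_firstOcc_nested (hMτ u hu) (hMτ v hv) hstart hend)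

lemma firstOcc_le_of_end_le (hM : IsAntichain pLE (M : Set PermS))
    (hMτ : ∀ u ∈ M, pLE u ⟨n, τ⟩) {u u₀ : PermS} (hu : u ∈ M) (hu₀ : u₀ ∈ M)
    (hend : firstOcc τ u + u.1 ≤ firstOcc τ u₀ + u₀.1) : firstOcc τ u ≤ firstOcc τ u₀ := by
  by_contra! h
  obtain rfl := eq_of_firstOcc_nested hM hMτ hu hu₀ h.le hend
  exact h.false

variable (τ) in
/-- Start of the window of `τ` of length `|u₀|` that hosts the leftmost occurrence of `p`. -/
def windowStart (u₀ p : PermS) : ℕ :=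
  if firstOcc τ p + p.1 ≤ firstOcc τ u₀ + u₀.1 then firstOcc τ p
  else firstOcc τ p + p.1 - u₀.1

lemma windowStart_spec (hM : IsAntichain pLE (M : Set PermS)) (hMτ : ∀ u ∈ M, pLE u ⟨n, τ⟩)
    {u₀ : PermS} (hu₀ : u₀ ∈ M) (hmax : ∀ u ∈ M, u.1 ≤ u₀.1) {u : PermS} (hu : u ∈ M) :
    windowStart τ u₀ u + u₀.1 ≤ n ∧ windowStart τ u₀ u ≤ firstOcc τ u ∧
      firstOcc τ u + u.1 ≤ windowStart τ u₀ u + u₀.1 := by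
  have hu₀n := (occursAt_firstOcc (hMτ u₀ hu₀)).add_le
  have hun := (occursAt_firstOcc (hMτ u hu)).add_le
  have hlen := hmax u hu
  unfold windowStart
  split_ifs with hend
  · have := firstOcc_le_of_end_le hM hMτ hu hu₀ hend
    omega
  · omega

lemma injOn_windowStart (hM : IsAntichain pLE (M : Set PermS)) (hMτ : ∀ u ∈ M, pLE u ⟨n, τ⟩)
    {u₀ : PermS} (hu₀ : u₀ ∈ M) : Set.InjOn (windowStart τ u₀) M := by
  intro u hu v hv h
  unfold windowStart at h
  split_ifs at h with hu' hv' hv'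
  · rcases le_total u.1 v.1 with hl | hl
    · exact eq_of_firstOcc_nested hM hMτ hu hv h.ge (by omega)
    · exact (eq_of_firstOcc_nested hM hMτ hv hu h.le (by omega)).symm
  · have := firstOcc_le_of_end_le hM hMτ hu hu₀ hu'
    omega
  · have := firstOcc_le_of_end_le hM hMτ hv hu₀ hv'
    omega
  · rcases le_total u.1 v.1 with hl | hl
    · exact eq_of_firstOcc_nested hM hMτ hu hv (by omega) (by omega)
    · exact (eq_of_firstOcc_nested hM hMτ hv hu (by omega) (by omega)).symm

end LeftmostOccurrence

section Interval

variable {m n : ℕ} (σ : Perm' m) (τ : Perm' n)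

def rankSet (r : ℕ) : Finset PermS :=
  (permsUpTo n).filter fun p => pLE ⟨m, σ⟩ p ∧ pLE p ⟨n, τ⟩ ∧ p.1 = m + r

lemma card_rankSet (r : ℕ) : (rankSet σ τ r).card = rankCard σ τ r := rfl

variable {σ τ}

lemma mem_rankSet {r : ℕ} {p : PermS} :
    p ∈ rankSet σ τ r ↔ pLE ⟨m, σ⟩ p ∧ pLE p ⟨n, τ⟩ ∧ p.1 = m + r := by
  simp only [rankSet, permsUpTo, Finset.mem_filter, Finset.mem_sigma, Finset.mem_range,
    Finset.mem_univ, and_true, and_iff_right_iff_imp]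
  exact fun h => Nat.lt_succ_of_le h.2.1.length_le

lemma card_le_rankCard_of_isAntichain {M : Finset PermS}
    (hMint : ∀ u ∈ M, pLE ⟨m, σ⟩ u ∧ pLE u ⟨n, τ⟩) (hM : IsAntichain pLE (M : Set PermS))
    {u₀ : PermS} (hu₀ : u₀ ∈ M) (hmax : ∀ u ∈ M, u.1 ≤ u₀.1) :
    M.card ≤ rankCard σ τ (u₀.1 - m) := by
  have hMτ : ∀ u ∈ M, pLE u ⟨n, τ⟩ := fun u hu => (hMint u hu).2
  have hm : m ≤ u₀.1 := (hMint u₀ hu₀).1.length_le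
  let F : PermS → PermS := fun u => ⟨u₀.1, window τ (windowStart τ u₀ u) u₀.1⟩
  have hF : ∀ u ∈ M, pLE u (F u) ∧ firstOcc τ (F u) = windowStart τ u₀ u ∧ pLE (F u) ⟨n, τ⟩ := by
    intro u hu
    obtain ⟨hW, hstart, hend⟩ := windowStart_spec hM hMτ hu₀ hmax hu
    obtain ⟨hle, hfirst⟩ := firstOcc_window (hMτ u hu) hW hstart hend
    exact ⟨hle, hfirst, _, occursAt_window τ hW⟩
  rw [← card_rankSet]
  refine Finset.card_le_card_of_injOn F (fun u hu => ?_) (fun u hu v hv huv => ?_)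
  · exact mem_rankSet.2 ⟨pLE_trans (hMint u hu).1 (hF u hu).1, (hF u hu).2.2,
      show u₀.1 = m + (u₀.1 - m) by omega⟩
  · refine injOn_windowStart hM hMτ hu₀ hu hv ?_
    rw [← (hF u hu).2.1, ← (hF v hv).2.1, huv]

lemma exists_card_le_sum_rankCard {U : Finset PermS}
    (hU : ∀ u ∈ U, pLE ⟨m, σ⟩ u ∧ pLE u ⟨n, τ⟩) {k : ℕ}
    (hchain : ∀ C ⊆ U, IsChain pLE (C : Set PermS) → C.card ≤ k) :
    ∃ T ⊆ Finset.range (n - m + 1), T.card ≤ k ∧ U.card ≤ ∑ r ∈ T, rankCard σ τ r := by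
  have hm : ∀ u ∈ U, m ≤ u.1 := fun u hu => (hU u hu).1.length_le
  refine exists_card_le_sum_of_isChain_card_le (fun p => p.1 - m) (rankCard σ τ) k U _
    (fun u hu => ?_) (fun a ha b hb hab hne => ?_) (fun M hMU hM u₀ hu₀ hmax => ?_) hchain
  · have : u.1 ≤ n := (hU u hu).2.length_le
    omega
  · have := hm a ha
    have := hab.length_lt hne
    omega
  · refine card_le_rankCard_of_isAntichain (fun u hu => hU u (hMU hu)) hM hu₀ fun u hu => ?_
    have := hmax u hu
    have := hm u (hMU hu)
    have := hm u₀ (hMU hu₀)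
    omega

lemma isAntichain_rankSet (r : ℕ) : IsAntichain pLE (rankSet σ τ r : Set PermS) :=
  fun _ hp _ hq hne h =>
    hne (h.eq_of_length_eq ((mem_rankSet.1 hp).2.2.trans (mem_rankSet.1 hq).2.2.symm))

lemma disjoint_rankSet {r r' : ℕ} (h : r ≠ r') : Disjoint (rankSet σ τ r) (rankSet σ τ r') :=
  Finset.disjoint_left.2 fun _ hp hq => by
    have := (mem_rankSet.1 hp).2.2.symm.trans (mem_rankSet.1 hq).2.2
    omega

lemma exists_isAntichain_card_eq_sum_rankCard {T : Finset ℕ} {k : ℕ} (hT : T.card = k) :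
    ∃ A : Fin k → Finset PermS, (∀ i, ∀ p ∈ A i, pLE ⟨m, σ⟩ p ∧ pLE p ⟨n, τ⟩) ∧
      (∀ i, IsAntichain pLE (A i : Set PermS)) ∧
      (Finset.univ.biUnion A).card = ∑ r ∈ T, rankCard σ τ r := by
  let e : Fin k ≃ T := (T.equivFin.trans (finCongr hT)).symm
  refine ⟨fun i => rankSet σ τ (e i), fun i p hp => (mem_rankSet.1 hp).imp_right And.left,
    fun i => isAntichain_rankSet _, ?_⟩
  rw [Finset.card_biUnion fun i _ j _ hij => disjoint_rankSet fun h => hij (e.injective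
    (Subtype.ext h))]
  simp only [card_rankSet]
  rw [← Finset.sum_coe_sort T]
  exact e.sum_comp fun r => rankCard σ τ r

end Interval

theorem stmt10_general {m n : ℕ} (σ : Perm' m) (τ : Perm' n)
    (k : ℕ) (hk2 : k ≤ n - m + 1) :
    ∃ c : ℕ,
      IsGreatest {c' : ℕ | ∃ A : Fin k → Finset PermS,
          (∀ i, ∀ p ∈ A i, pLE ⟨m, σ⟩ p ∧ pLE p ⟨n, τ⟩) ∧
          (∀ i, ∀ p ∈ A i, ∀ q ∈ A i, p ≠ q → ¬ pLE p q ∧ ¬ pLE q p) ∧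
          c' = (Finset.univ.biUnion A).card} c ∧
      IsGreatest {s : ℕ | ∃ T : Finset ℕ, T ⊆ Finset.range (n - m + 1) ∧ T.card = k ∧
          s = ∑ r ∈ T, rankCard σ τ r} c := by
  obtain ⟨T₀, hT₀, hT₀max⟩ := ((Finset.range (n - m + 1)).powersetCard k).exists_max_image
    (fun T => ∑ r ∈ T, rankCard σ τ r) (Finset.powersetCard_nonempty.2 (by simpa using hk2))
  rw [Finset.mem_powersetCard] at hT₀
  refine ⟨_, ⟨?_, ?_⟩, ⟨T₀, hT₀.1, hT₀.2, rfl⟩, ?_⟩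
  · obtain ⟨A, hAint, hA, hAcard⟩ := exists_isAntichain_card_eq_sum_rankCard hT₀.2
    exact ⟨A, hAint, fun i p hp q hq hpq => ⟨hA i hp hq hpq, hA i hq hp hpq.symm⟩, hAcard.symm⟩
  · rintro _ ⟨A, hAint, hA, rfl⟩
    obtain ⟨T, hT, hTk, hcard⟩ := exists_card_le_sum_rankCard
      (fun p hp => by obtain ⟨i, -, hi⟩ := Finset.mem_biUnion.1 hp; exact hAint i p hi)
      fun C hC hchain => by
        simpa using card_le_of_isChain_subset_biUnion
          (fun i _ hp _ hq hpq => (hA i _ hp _ hq hpq).1) hC hchain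
    obtain ⟨T', hTT', hT', hT'k⟩ :=
      Finset.exists_subsuperset_card_eq hT hTk (by simpa using hk2)
    calc (Finset.univ.biUnion A).card ≤ ∑ r ∈ T, rankCard σ τ r := hcard
      _ ≤ ∑ r ∈ T', rankCard σ τ r := Finset.sum_le_sum_of_subset hTT'
      _ ≤ ∑ r ∈ T₀, rankCard σ τ r := hT₀max T' (Finset.mem_powersetCard.2 ⟨hT', hT'k⟩)
  · rintro _ ⟨T, hT, hTk, rfl⟩
    exact hT₀max T (Finset.mem_powersetCard.2 ⟨hT, hTk⟩)

/-- Theorem 5.5: every interval `[σ,τ]` is strongly Sperner: for every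
`1 ≤ k ≤ N + 1` (with `N = |τ| - |σ|`), the maximum cardinality of a union of `k`
antichains of `[σ,τ]` equals the maximum possible sum of `k` of the rank sizes, i.e. the
sum of the `k` largest rank sizes. -/
theorem stmt10 {m n : ℕ} (hm : 1 ≤ m) (σ : Perm' m) (τ : Perm' n) (hle : PattLE σ τ)
    (k : ℕ) (hk1 : 1 ≤ k) (hk2 : k ≤ n - m + 1) :
    ∃ c : ℕ,
      IsGreatest {c' : ℕ | ∃ A : Fin k → Finset PermS,
          (∀ i, ∀ p ∈ A i, pLE ⟨m, σ⟩ p ∧ pLE p ⟨n, τ⟩) ∧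
          (∀ i, ∀ p ∈ A i, ∀ q ∈ A i, p ≠ q → ¬ pLE p q ∧ ¬ pLE q p) ∧
          c' = (Finset.univ.biUnion A).card} c ∧
      IsGreatest {s : ℕ | ∃ T : Finset ℕ, T ⊆ Finset.range (n - m + 1) ∧ T.card = k ∧
          s = ∑ r ∈ T, rankCard σ τ r} c :=
  stmt10_general σ τ k hk2

end
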